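/- Let (R,m) be a Noetherian local ring, n ≥ 2, and let J = (f_1,...,f_n) be a reduction of I = (f_1,...,f_n,f). The following are equivalent: (a) rt(I) = rn_J(I) + 1 (I has the expected relation type with respect to J); (b) for all d ≥ rn_J(I) + 2, the degree-d part of the first Koszul homology satisfies H_1(f_1t,...,f_nt; R(I))_d = ft · H_1(f_1t,...,f_nt; R(I))_{d-1}. -/

import Mathlib

open Ideal Submodule

variable {R : Type*} [CommRing R]

/-- The linear map `(a₁,…,aₘ) ↦ Σ aⱼ zⱼ`. -/
noncomputable def sumMul {m : ℕ} (z : Fin m → R) : (Fin m → R) →ₗ[R] R :=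
  ∑ j, (LinearMap.proj j : (Fin m → R) →ₗ[R] R).smulRight (z j)

/-- The degree-`d` cycles of the Koszul complex of the degree-one elements
`z₁t,…,zₘt` on the Rees algebra of `I`. -/
noncomputable def kosZ1 {m : ℕ} (I : Ideal R) (z : Fin m → R) (d : ℕ) :
    Submodule R (Fin m → R) :=
  (⨅ j : Fin m, Submodule.comap (LinearMap.proj j) ((I ^ (d - 1) : Ideal R) : Submodule R R))
    ⊓ LinearMap.ker (sumMul z)

/-- The degree-`d` boundaries of the Koszul complex of `z₁t,…,zₘt` on the Rees algebra
of `I`. -/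
noncomputable def kosB1 {m : ℕ} (I : Ideal R) (z : Fin m → R) (d : ℕ) :
    Submodule R (Fin m → R) :=
  Submodule.span R {v | ∃ j l : Fin m, ∃ u ∈ I ^ (d - 2),
    v = Pi.single l (z j * u) - Pi.single j (z l * u)}

/-- The degree-`d` component of the first Koszul homology `H₁(z₁t,…,zₘt; R(I))`;
for the full sequence of generators of `I` this computes the `d`-th module of effective
relations `E(I)_d`. -/
noncomputable abbrev kosH1 {m : ℕ} (I : Ideal R) (z : Fin m → R) (d : ℕ) :=
  ↥(kosZ1 I z d) ⧸ (Submodule.comap (kosZ1 I z d).subtype (kosB1 I z d))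

/-- The reduction number of `I` with respect to `J`. -/
noncomputable def reductionNumber (J I : Ideal R) : ℕ :=
  sInf {r | I ^ (r + 1) = J * I ^ r}

/-- The relation type of `I`, computed through the vanishing of the modules of effective
relations: the smallest `L ≥ 1` such that `E(I)_d = H₁(z₁t,…,zₘt; R(I))_d = 0` for all
`d ≥ L + 1`, where `z` is a system of generators of `I`. -/
noncomputable def relationTypeKoszul {m : ℕ} (I : Ideal R) (z : Fin m → R) : ℕ :=
  sInf {L | 1 ≤ L ∧ ∀ d : ℕ, L + 1 ≤ d → kosZ1 I z d ≤ kosB1 I z d}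

/-!
Split off the last coordinate. A Koszul boundary of `(g, f)` has the form
`(β + f • c, -∑ cᵢ gᵢ)` with `β` a boundary of `g` and the entries of `c` in `I ^ (d - 2)`,
and a cycle `(w, b)` of `(g, f)` has `b ∈ I ^ (d - 1)`. When `I ^ (d - 1) = J * I ^ (d - 2)`
we may write `b = ∑ cᵢ gᵢ`, and `(w, b)` is a boundary exactly when the cycle `w + f • c` of
`g` lies in `f • Z_{d-1}(g) + B_d(g)`. Hence `E(I)_d = 0` is equivalent to
`Z_d(g) = f • Z_{d-1}(g) + B_d(g)` for all `d ≥ rn_J(I) + 2`.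

In degree `d = rn_J(I) + 1 ≥ 2`, writing `f ^ d = ∑ aᵢ gᵢ` with `aᵢ ∈ I ^ (d - 1)` gives the
cycle `(a, -f ^ (d - 1))`; it is a boundary only if `f ^ (d - 1) ∈ J * I ^ (d - 2)`, which
forces `I ^ (d - 1) = J * I ^ (d - 2)` against the minimality of `rn_J(I)`. So `E(I)_d ≠ 0`
there, and `rt(I) ≥ rn_J(I) + 1` always.
-/

namespace Ideal

variable {ι : Type*} [Fintype ι]

theorem mem_span_range_mul_iff {g : ι → R} {K : Ideal R} {b : R} :
    b ∈ span (Set.range g) * K ↔ ∃ c : ι → R, (∀ i, c i ∈ K) ∧ ∑ i, c i * g i = b := by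
  constructor
  · intro hb
    rw [mul_comm, ← smul_eq_mul, Submodule.mem_ideal_smul_span_iff_exists_sum] at hb
    obtain ⟨c, hc, rfl⟩ := hb
    exact ⟨c, hc, by simp [Finsupp.sum_fintype]⟩
  · rintro ⟨c, hc, rfl⟩
    exact Submodule.sum_mem _ fun i _ =>
      mul_comm (c i) (g i) ▸ mul_mem_mul (subset_span ⟨i, rfl⟩) (hc i)

variable {I J : Ideal R}

theorem mul_mem_pow_sub_one {d : ℕ} {x y : R} (hx : x ∈ I) (hy : y ∈ I ^ (d - 2)) :
    x * y ∈ I ^ (d - 1) :=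
  pow_le_pow_right (by omega) (pow_succ' I (d - 2) ▸ mul_mem_mul hx hy)

theorem pow_succ_eq_mul_pow_of_le {r k : ℕ} (hr : I ^ (r + 1) = J * I ^ r) (hk : r ≤ k) :
    I ^ (k + 1) = J * I ^ k := by
  induction k, hk using Nat.le_induction with
  | base => exact hr
  | succ k _ ih =>
    calc I ^ (k + 1 + 1) = J * I ^ k * I := by rw [pow_succ, ih]
      _ = J * I ^ (k + 1) := by rw [mul_assoc, ← pow_succ]

theorem pow_succ_le_mul_pow_sup {f : R} (hI : I = J ⊔ span {f}) (m : ℕ) :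
    I ^ (m + 1) ≤ J * I ^ m ⊔ span {f ^ (m + 1)} := by
  have hfI : f ∈ I := hI ▸ mem_sup_right (mem_span_singleton_self f)
  induction m with
  | zero => simp [hI]
  | succ m ih =>
    have hf : span {f ^ (m + 1)} * I ≤ J * I ^ (m + 1) ⊔ span {f ^ (m + 2)} := by
      conv_lhs => rw [hI]
      rw [mul_sup, span_singleton_mul_span_singleton, ← pow_succ]
      refine sup_le_sup_right ?_ _
      rw [mul_comm]
      exact mul_mono_right ((span_singleton_le_iff_mem _).2 (pow_mem_pow hfI _))
    calc I ^ (m + 2) = I ^ (m + 1) * I := pow_succ I (m + 1)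
      _ ≤ (J * I ^ m ⊔ span {f ^ (m + 1)}) * I := mul_mono_left ih
      _ = J * I ^ (m + 1) ⊔ span {f ^ (m + 1)} * I := by rw [sup_mul, mul_assoc, ← pow_succ]
      _ ≤ J * I ^ (m + 1) ⊔ span {f ^ (m + 2)} := sup_le le_sup_left hf

theorem pow_succ_eq_mul_pow_of_pow_mem {f : R} {k : ℕ} (hI : I = J ⊔ span {f})
    (hf : f ^ (k + 1) ∈ J * I ^ k) : I ^ (k + 1) = J * I ^ k := by
  refine le_antisymm ((pow_succ_le_mul_pow_sup hI k).trans (sup_le le_rfl ?_)) ?_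
  · exact (span_singleton_le_iff_mem _).2 hf
  · exact pow_succ' I k ▸ mul_mono_left (hI ▸ le_sup_left)

end Ideal

section Koszul

variable {m : ℕ} {I : Ideal R} {z : Fin m → R} {d : ℕ}

lemma sumMul_apply (z v : Fin m → R) : sumMul z v = ∑ j, v j * z j := by
  simp [sumMul]

lemma sumMul_single (z : Fin m → R) (i : Fin m) (u : R) :
    sumMul z (Pi.single i u) = u * z i := by
  simp [sumMul_apply, Pi.single_apply]

lemma mem_kosZ1 {v : Fin m → R} :
    v ∈ kosZ1 I z d ↔ (∀ j, v j ∈ I ^ (d - 1)) ∧ sumMul z v = 0 := by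
  simp [kosZ1]

lemma kosB1_le_kosZ1 (hz : ∀ i, z i ∈ I) : kosB1 I z d ≤ kosZ1 I z d := by
  rw [kosB1, Submodule.span_le]
  rintro _ ⟨j, l, u, hu, rfl⟩
  have hsingle (i : Fin m) {x : R} (hx : x ∈ I) (k : Fin m) :
      (Pi.single i (x * u) : Fin m → R) k ∈ I ^ (d - 1) := by
    rw [Pi.single_apply]
    split_ifs
    exacts [Ideal.mul_mem_pow_sub_one hx hu, zero_mem _]
  refine mem_kosZ1.2 ⟨fun k => sub_mem (hsingle l (hz j) k) (hsingle j (hz l) k), ?_⟩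
  rw [map_sub, sumMul_single, sumMul_single]
  ring

lemma smul_mem_kosZ1 {x : R} (hx : x ∈ I) {v : Fin m → R} (hv : v ∈ kosZ1 I z (d - 1)) :
    x • v ∈ kosZ1 I z d := by
  rw [mem_kosZ1] at hv ⊢
  exact ⟨fun j => Ideal.mul_mem_pow_sub_one hx (hv.1 j), by rw [map_smul, hv.2, smul_zero]⟩

end Koszul

def snocLinear (n : ℕ) : (Fin n → R) × R →ₗ[R] Fin (n + 1) → R where
  toFun p := Fin.snoc p.1 p.2
  map_add' _ _ := by ext i; refine Fin.lastCases ?_ (fun j => ?_) i <;> simp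
  map_smul' _ _ := by ext i; refine Fin.lastCases ?_ (fun j => ?_) i <;> simp

def snocZero (n : ℕ) : (Fin n → R) →ₗ[R] Fin (n + 1) → R :=
  snocLinear n ∘ₗ LinearMap.inl R _ R

section Snoc

variable {n : ℕ} (g : Fin n → R) (f : R) (I : Ideal R) (d : ℕ)

/-- The Koszul differential `c ↦ ∂(c ∧ eₙ₊₁)` of `(g, f)`. -/
noncomputable def wedgeLast : (Fin n → R) →ₗ[R] Fin (n + 1) → R :=
  snocLinear n ∘ₗ (f • LinearMap.id).prod (-sumMul g)

lemma snocZero_apply (v : Fin n → R) : snocZero n v = Fin.snoc v 0 := rfl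

lemma wedgeLast_apply (c : Fin n → R) : wedgeLast g f c = Fin.snoc (f • c) (-sumMul g c) := rfl

lemma sumMul_snoc (v : Fin n → R) (b : R) :
    sumMul (Fin.snoc g f) (Fin.snoc v b) = sumMul g v + b * f := by
  simp [sumMul_apply, Fin.sum_univ_castSucc]

lemma snocZero_single (i : Fin n) (x : R) :
    snocZero n (Pi.single i x) = Pi.single i.castSucc x := by
  ext k
  refine Fin.lastCases ?_ (fun k => ?_) k <;> simp [snocZero_apply, Pi.single_apply]

lemma wedgeLast_single (i : Fin n) (x : R) :
    wedgeLast g f (Pi.single i x) =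
      Pi.single i.castSucc (f * x) - Pi.single (Fin.last n) (g i * x) := by
  ext k
  refine Fin.lastCases ?_ (fun k => ?_) k <;>
    simp [wedgeLast_apply, sumMul_single, Pi.single_apply, mul_comm]

lemma map_snocZero_kosB1_le : (kosB1 I g d).map (snocZero n) ≤ kosB1 I (Fin.snoc g f) d := by
  rw [kosB1, Submodule.map_span]
  refine Submodule.span_mono ?_
  rintro _ ⟨_, ⟨j, l, u, hu, rfl⟩, rfl⟩
  exact ⟨j.castSucc, l.castSucc, u, hu, by simp [snocZero_single]⟩

lemma map_wedgeLast_le_kosB1 :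
    (Submodule.pi Set.univ fun _ => I ^ (d - 2)).map (wedgeLast g f) ≤
      kosB1 I (Fin.snoc g f) d := by
  rintro _ ⟨c, hc, rfl⟩
  rw [← Finset.univ_sum_single c, map_sum]
  refine Submodule.sum_mem _ fun i _ => Submodule.subset_span ?_
  exact ⟨Fin.last n, i.castSucc, c i, hc i trivial, by simp [wedgeLast_single]⟩

lemma kosB1_snoc_le :
    kosB1 I (Fin.snoc g f) d ≤
      (kosB1 I g d).map (snocZero n) ⊔
        (Submodule.pi Set.univ fun _ => I ^ (d - 2)).map (wedgeLast g f) := by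
  have hsingle {i : Fin n} {u : R} (hu : u ∈ I ^ (d - 2)) :
      Pi.single i u ∈ Submodule.pi Set.univ fun _ : Fin n => I ^ (d - 2) :=
    Submodule.le_comap_single_pi _ hu
  rw [kosB1, Submodule.span_le]
  rintro _ ⟨j, l, u, hu, rfl⟩
  refine Fin.lastCases ?_ (fun j => ?_) j <;> refine Fin.lastCases ?_ (fun l => ?_) l
  · simp
  · exact Submodule.mem_sup_right ⟨Pi.single l u, hsingle hu, by simp [wedgeLast_single]⟩
  · refine Submodule.mem_sup_right ⟨Pi.single j (-u), hsingle (neg_mem hu), ?_⟩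
    rw [wedgeLast_single, Fin.snoc_last, Fin.snoc_castSucc, mul_neg, mul_neg, Pi.single_neg,
      Pi.single_neg, neg_sub_neg]
  · exact Submodule.mem_sup_left ⟨_, Submodule.subset_span ⟨j, l, u, hu, rfl⟩,
      by simp [snocZero_single]⟩

lemma snocZero_add_wedgeLast (β c : Fin n → R) :
    snocZero n β + wedgeLast g f c = Fin.snoc (β + f • c) (-sumMul g c) := by
  ext k
  refine Fin.lastCases ?_ (fun k => ?_) k <;> simp [snocZero_apply, wedgeLast_apply]

lemma mem_kosB1_snoc {v : Fin (n + 1) → R} :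
    v ∈ kosB1 I (Fin.snoc g f) d ↔ ∃ β ∈ kosB1 I g d, ∃ c : Fin n → R,
      (∀ i, c i ∈ I ^ (d - 2)) ∧ Fin.snoc (β + f • c) (-sumMul g c) = v := by
  constructor
  · intro hv
    obtain ⟨_, ⟨β, hβ, rfl⟩, _, ⟨c, hc, rfl⟩, rfl⟩ :=
      Submodule.mem_sup.1 (kosB1_snoc_le g f I d hv)
    exact ⟨β, hβ, c, fun i => hc i trivial, (snocZero_add_wedgeLast g f β c).symm⟩
  · rintro ⟨β, hβ, c, hc, rfl⟩
    rw [← snocZero_add_wedgeLast]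
    exact add_mem (map_snocZero_kosB1_le g f I d ⟨β, hβ, rfl⟩)
      (map_wedgeLast_le_kosB1 g f I d ⟨c, fun i _ => hc i, rfl⟩)

variable {g f I d}

lemma snoc_mem_kosZ1_snoc {w : Fin n → R} {b : R} :
    Fin.snoc w b ∈ kosZ1 I (Fin.snoc g f) d ↔
      (∀ j, w j ∈ I ^ (d - 1)) ∧ b ∈ I ^ (d - 1) ∧ sumMul g w + b * f = 0 := by
  simp [mem_kosZ1, Fin.forall_fin_succ', sumMul_snoc, and_assoc]

lemma kosZ1_le_smul_sup_kosB1 (hZB : kosZ1 I (Fin.snoc g f) d ≤ kosB1 I (Fin.snoc g f) d) :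
    kosZ1 I g d ≤ (kosZ1 I g (d - 1)).map (f • LinearMap.id) ⊔ kosB1 I g d := by
  intro w hw
  obtain ⟨hw, hw0⟩ := mem_kosZ1.1 hw
  have hw' : Fin.snoc w 0 ∈ kosZ1 I (Fin.snoc g f) d :=
    snoc_mem_kosZ1_snoc.2 ⟨hw, zero_mem _, by rw [hw0, zero_mul, add_zero]⟩
  obtain ⟨β, hβ, c, hc, hv⟩ := (mem_kosB1_snoc g f I d).1 (hZB hw')
  obtain ⟨rfl, hc0⟩ := Fin.snoc_inj.1 hv
  rw [add_comm]
  exact Submodule.add_mem_sup ⟨c, mem_kosZ1.2 ⟨hc, neg_eq_zero.1 hc0⟩, rfl⟩ hβ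

lemma smul_sup_kosB1_le_kosZ1 (hf : f ∈ I) (hg : ∀ i, g i ∈ I) :
    (kosZ1 I g (d - 1)).map (f • LinearMap.id) ⊔ kosB1 I g d ≤ kosZ1 I g d :=
  sup_le (Submodule.map_le_iff_le_comap.2 fun _ hv => smul_mem_kosZ1 hf hv) (kosB1_le_kosZ1 hg)

lemma kosZ1_snoc_le_kosB1_snoc (hf : f ∈ I)
    (hpow : I ^ (d - 1) = Ideal.span (Set.range g) * I ^ (d - 2))
    (h : kosZ1 I g d ≤ (kosZ1 I g (d - 1)).map (f • LinearMap.id) ⊔ kosB1 I g d) :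
    kosZ1 I (Fin.snoc g f) d ≤ kosB1 I (Fin.snoc g f) d := by
  intro v hv
  obtain ⟨w, b, rfl⟩ : ∃ w b, Fin.snoc w b = v := ⟨_, _, Fin.snoc_init_self v⟩
  obtain ⟨hw, hb, hwb⟩ := snoc_mem_kosZ1_snoc.1 hv
  obtain ⟨c, hc, hcb⟩ := Ideal.mem_span_range_mul_iff.1 (hpow ▸ hb)
  rw [← sumMul_apply] at hcb
  have hwc : w + f • c ∈ kosZ1 I g d := by
    refine mem_kosZ1.2 ⟨fun j => add_mem (hw j) (Ideal.mul_mem_pow_sub_one hf (hc j)), ?_⟩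
    rw [map_add, map_smul, hcb, smul_eq_mul]
    linear_combination hwb
  obtain ⟨_, ⟨z, hz, rfl⟩, β, hβ, hzβ⟩ := Submodule.mem_sup.1 (h hwc)
  obtain ⟨hzI, hz0⟩ := mem_kosZ1.1 hz
  refine (mem_kosB1_snoc g f I d).2 ⟨β, hβ, z - c, fun i => sub_mem (hzI i) (hc i), ?_⟩
  rw [Fin.snoc_inj, map_sub, hz0, hcb, zero_sub, neg_neg]
  refine ⟨?_, rfl⟩
  simp only [LinearMap.smul_apply, LinearMap.id_apply] at hzβ
  linear_combination (norm := module) hzβ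

theorem kosZ1_snoc_le_kosB1_snoc_iff (hf : f ∈ I) (hg : ∀ i, g i ∈ I)
    (hpow : I ^ (d - 1) = Ideal.span (Set.range g) * I ^ (d - 2)) :
    kosZ1 I (Fin.snoc g f) d ≤ kosB1 I (Fin.snoc g f) d ↔
      kosZ1 I g d = (kosZ1 I g (d - 1)).map (f • LinearMap.id) ⊔ kosB1 I g d :=
  ⟨fun h => le_antisymm (kosZ1_le_smul_sup_kosB1 h) (smul_sup_kosB1_le_kosZ1 hf hg),
    fun h => kosZ1_snoc_le_kosB1_snoc hf hpow h.le⟩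

theorem pow_succ_eq_mul_pow_of_kosZ1_snoc_le {k : ℕ}
    (hI : I = Ideal.span (Set.range g) ⊔ Ideal.span {f})
    (hk : I ^ (k + 2) = Ideal.span (Set.range g) * I ^ (k + 1))
    (hZB : kosZ1 I (Fin.snoc g f) (k + 2) ≤ kosB1 I (Fin.snoc g f) (k + 2)) :
    I ^ (k + 1) = Ideal.span (Set.range g) * I ^ k := by
  have hf : f ∈ I := hI ▸ Ideal.mem_sup_right (Ideal.mem_span_singleton_self f)
  obtain ⟨a, ha, hfa⟩ := Ideal.mem_span_range_mul_iff.1 (hk ▸ Ideal.pow_mem_pow hf (k + 2))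
  have hv : Fin.snoc a (-f ^ (k + 1)) ∈ kosZ1 I (Fin.snoc g f) (k + 2) :=
    snoc_mem_kosZ1_snoc.2 ⟨ha, neg_mem (Ideal.pow_mem_pow hf _), by rw [sumMul_apply, hfa]; ring⟩
  obtain ⟨β, -, c, hc, hβc⟩ := (mem_kosB1_snoc g f I _).1 (hZB hv)
  refine Ideal.pow_succ_eq_mul_pow_of_pow_mem hI (Ideal.mem_span_range_mul_iff.2 ⟨c, hc, ?_⟩)
  rw [← sumMul_apply]
  exact neg_inj.1 (Fin.snoc_inj.1 hβc).2

end Snoc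

lemma relationTypeKoszul_eq_succ_iff {m : ℕ} {I : Ideal R} {z : Fin m → R} {r : ℕ} :
    relationTypeKoszul I z = r + 1 ↔
      (∀ d, r + 2 ≤ d → kosZ1 I z d ≤ kosB1 I z d) ∧
        (1 ≤ r → ¬ kosZ1 I z (r + 1) ≤ kosB1 I z (r + 1)) := by
  set S := {L | 1 ≤ L ∧ ∀ d : ℕ, L + 1 ≤ d → kosZ1 I z d ≤ kosB1 I z d}
  change sInf S = r + 1 ↔ _
  constructor
  · intro h
    have hS : sInf S ∈ S := Nat.sInf_mem (Nat.nonempty_of_sInf_eq_succ h)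
    rw [h] at hS
    refine ⟨hS.2, fun hr hZB => ?_⟩
    have : sInf S ≤ r := Nat.sInf_le ⟨hr, fun d hd =>
      (eq_or_lt_of_le hd).elim (fun hd => hd ▸ hZB) (hS.2 d)⟩
    omega
  · rintro ⟨hstable, hsharp⟩
    have hS : r + 1 ∈ S := ⟨by omega, hstable⟩
    refine le_antisymm (Nat.sInf_le hS) (not_lt.1 fun hlt => ?_)
    obtain ⟨hL, hLd⟩ := Nat.sInf_mem ⟨_, hS⟩
    exact hsharp (by omega) (hLd _ (by omega))

theorem stmt11_general {R : Type*} [CommRing R]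
    {n : ℕ} (g : Fin n → R) (f : R) (J I : Ideal R)
    (hJ : J = Ideal.span (Set.range g)) (hI : I = J ⊔ Ideal.span {f})
    (hred : ∃ r : ℕ, I ^ (r + 1) = J * I ^ r) :
    relationTypeKoszul I (Fin.snoc g f : Fin (n + 1) → R) = reductionNumber J I + 1 ↔
    (∀ d : ℕ, reductionNumber J I + 2 ≤ d →
      kosZ1 I g d =
        Submodule.map (f • (LinearMap.id : (Fin n → R) →ₗ[R] (Fin n → R)))
          (kosZ1 I g (d - 1)) ⊔ kosB1 I g d) := by
  subst hJ
  have hf : f ∈ I := hI ▸ Ideal.mem_sup_right (Ideal.mem_span_singleton_self f)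
  have hg (i : Fin n) : g i ∈ I := hI ▸ Ideal.mem_sup_left (Ideal.subset_span ⟨i, rfl⟩)
  have hrn : I ^ (reductionNumber _ I + 1) = _ * I ^ reductionNumber _ I := Nat.sInf_mem hred
  rw [relationTypeKoszul_eq_succ_iff, and_iff_left]
  · refine forall₂_congr fun d hd => kosZ1_snoc_le_kosB1_snoc_iff hf hg ?_
    have := Ideal.pow_succ_eq_mul_pow_of_le hrn (k := d - 2) (by omega)
    rwa [show d - 2 + 1 = d - 1 by omega] at this
  · intro hr hZB
    obtain ⟨k, hk⟩ : ∃ k, reductionNumber _ I = k + 1 := ⟨_, (Nat.sub_add_cancel hr).symm⟩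
    rw [hk] at hrn hZB
    have : reductionNumber _ I ≤ k :=
      Nat.sInf_le (pow_succ_eq_mul_pow_of_kosZ1_snoc_le hI hrn hZB)
    omega

theorem stmt11 {R : Type*} [CommRing R] [IsNoetherianRing R] [IsLocalRing R]
    {n : ℕ} (hn : 2 ≤ n) (g : Fin n → R) (f : R) (J I : Ideal R)
    (hJ : J = Ideal.span (Set.range g)) (hI : I = J ⊔ Ideal.span {f})
    (hred : ∃ r : ℕ, I ^ (r + 1) = J * I ^ r) :
    relationTypeKoszul I (Fin.snoc g f : Fin (n + 1) → R) = reductionNumber J I + 1 ↔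
    (∀ d : ℕ, reductionNumber J I + 2 ≤ d →
      kosZ1 I g d =
        Submodule.map (f • (LinearMap.id : (Fin n → R) →ₗ[R] (Fin n → R)))
          (kosZ1 I g (d - 1)) ⊔ kosB1 I g d) :=
  stmt11_general g f J I hJ hI hred
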